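/- arXiv:2410.14046 — 2 statements merged into one kernel-verified Lean document; each statement's English description precedes it below -/
import Mathlib

section
/- Let H be a real inner product space, S a set, and φ : S → H a feature map; for ξ ∈ H and t ∈ S write ξ(t) := ⟪ξ, φ t⟫ for the evaluation. Fix n, p, R ∈ ℕ, finite subsets T_i ⊆ S for i ∈ [n] with T = ∪_{i=1}^n T_i, data values X_{ij}(t) ∈ ℝ for i ∈ [n], j ∈ [p], t ∈ T_i, a function f : ℝ × ℝ → ℝ, and λ > 0. Define the objective F on tuples ((a_r, b_r, ξ_r))_{r=1}^R ∈ (ℝⁿ × ℝᵖ × H)^R by F = Σ_{i=1}^n Σ_{j=1}^p Σ_{t∈T_i} f( Σ_{r=1}^R (a_r)_i·(b_r)_j·⟪ξ_r, φ t⟫, X_{ij}(t) ), and let the feasible set be Φ = { ((a_r,b_r,ξ_r))_r : ‖a_r‖·‖b_r‖·‖ξ_r‖ ≤ λ for all r }. If F attains its minimum over Φ at some point ((â_r, b̂_r, ξ̂_r))_r ∈ Φ, then, letting P denote the orthogonal projection of H onto the finite-dimensional subspace V = span{φ t : t ∈ T}, the point ((â_r, b̂_r, P ξ̂_r))_r also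 lies in Φ and also minimizes F over Φ. Consequently the problem admits a minimizer in which each functional factor has the form ξ̂_r = Σ_{t∈T} θ_{r,t}·φ t for real coefficients θ_{r,t}. -/
/-!
The objective sees each functional factor `ξ` only through its evaluations `⟪ξ, φ t⟫` at the
observed points `t ∈ T`, and these are unchanged by the orthogonal projection `P` onto
`V = span {φ t : t ∈ T}`, since `ξ - P ξ ⊥ φ t`. By Pythagoras `P` does not increase norms, so
the projected point stays feasible; it has the same objective value, hence is again a minimizer,
and its functional factors lie in the span of finitely many feature vectors.
-/

open scoped RealInnerProductSpace

namespace Submodule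

variable {𝕜 E : Type*} [RCLike 𝕜] [NormedAddCommGroup E] [InnerProductSpace 𝕜 E]
  {K : Submodule 𝕜 E} {u w : E}

theorem norm_le_of_sub_mem_orthogonal (hu : u ∈ K) (hw : w - u ∈ Kᗮ) : ‖u‖ ≤ ‖w‖ := by
  have hpyth := norm_add_sq_eq_norm_sq_add_norm_sq_of_inner_eq_zero (𝕜 := 𝕜) u (w - u)
    (inner_right_of_mem_orthogonal hu hw)
  rw [add_sub_cancel] at hpyth
  exact (mul_self_le_mul_self_iff (norm_nonneg u) (norm_nonneg w)).mpr
    (hpyth ▸ le_add_of_nonneg_right (mul_self_nonneg _))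

theorem inner_eq_of_sub_mem_orthogonal {x : E} (hx : x ∈ K) (hw : w - u ∈ Kᗮ) :
    inner 𝕜 u x = inner 𝕜 w x := by
  have h := inner_left_of_mem_orthogonal hx hw
  rw [inner_sub_left, sub_eq_zero] at h
  exact h.symm

end Submodule

theorem stmt_1_general
    {H : Type*} [NormedAddCommGroup H] [InnerProductSpace ℝ H]
    {S : Type*} [DecidableEq S] (φ : S → H)
    (n p R : ℕ) (Ti : Fin n → Finset S)
    (X : Fin n → Fin p → S → ℝ) (f : ℝ → ℝ → ℝ) (lam : ℝ)
    (T : Finset S) (hT : T = Finset.univ.biUnion Ti)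
    (F : (Fin R → EuclideanSpace ℝ (Fin n) × EuclideanSpace ℝ (Fin p) × H) → ℝ)
    (hF : ∀ v, F v = ∑ i : Fin n, ∑ j : Fin p, ∑ t ∈ Ti i,
        f (∑ r : Fin R, (v r).1 i * (v r).2.1 j * ⟪(v r).2.2, φ t⟫) (X i j t))
    (Φ : Set (Fin R → EuclideanSpace ℝ (Fin n) × EuclideanSpace ℝ (Fin p) × H))
    (hΦ : Φ = {v | ∀ r, ‖(v r).1‖ * ‖(v r).2.1‖ * ‖(v r).2.2‖ ≤ lam})
    (V : Submodule ℝ H) (hV : V = Submodule.span ℝ (φ '' (T : Set S)))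
    -- P is the orthogonal projection of H onto V
    (P : H → H) (hP : ∀ w : H, P w ∈ V ∧ w - P w ∈ Vᗮ)
    (vhat : Fin R → EuclideanSpace ℝ (Fin n) × EuclideanSpace ℝ (Fin p) × H)
    (hmem : vhat ∈ Φ) (hmin : ∀ v ∈ Φ, F vhat ≤ F v) :
    (fun r => ((vhat r).1, (vhat r).2.1, P (vhat r).2.2)) ∈ Φ ∧
    (∀ v ∈ Φ, F (fun r => ((vhat r).1, (vhat r).2.1, P (vhat r).2.2)) ≤ F v) ∧
    ∃ θ : Fin R → S → ℝ, ∀ r, P (vhat r).2.2 = ∑ t ∈ T, θ r t • φ t := by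
  have hφ : ∀ t ∈ T, φ t ∈ V := fun t ht => hV ▸ Submodule.subset_span ⟨t, ht, rfl⟩
  have hfeasible : (fun r => ((vhat r).1, (vhat r).2.1, P (vhat r).2.2)) ∈ Φ := by
    subst hΦ
    intro r
    have hproj := Submodule.norm_le_of_sub_mem_orthogonal (hP (vhat r).2.2).1 (hP (vhat r).2.2).2
    exact (mul_le_mul_of_nonneg_left hproj (by positivity)).trans (hmem r)
  have hsame : F (fun r => ((vhat r).1, (vhat r).2.1, P (vhat r).2.2)) = F vhat := by
    rw [hF, hF]
    refine Finset.sum_congr rfl fun i _ => Finset.sum_congr rfl fun j _ =>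
      Finset.sum_congr rfl fun t ht => ?_
    have htT : t ∈ T := hT ▸ Finset.mem_biUnion.mpr ⟨i, Finset.mem_univ i, ht⟩
    simp only [Submodule.inner_eq_of_sub_mem_orthogonal (hφ t htT) (hP _).2]
  refine ⟨hfeasible, fun v hv => hsame ▸ hmin v hv, ?_⟩
  have hrep : ∀ r, ∃ θ : S → ℝ, ∑ t ∈ T, θ t • φ t = P (vhat r).2.2 := fun r =>
    (Submodule.mem_span_image_finset_iff_exists_fun' ℝ).mp (hV ▸ (hP (vhat r).2.2).1)
  choose θ hθ using hrep
  exact ⟨θ, fun r => (hθ r).symm⟩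

/-- Representer-theorem content of Proposition 1: if the generalized tensor
decomposition objective attains its minimum over the feasible set Φ, then
replacing each functional factor by its orthogonal projection onto
`V = span {φ t : t ∈ T}` stays feasible and still minimizes, so there is a
minimizer whose functional factors are finite linear combinations of the
feature vectors at the observed time points. -/
theorem stmt_1
    {H : Type*} [NormedAddCommGroup H] [InnerProductSpace ℝ H]
    {S : Type*} [DecidableEq S] (φ : S → H)
    (n p R : ℕ) (Ti : Fin n → Finset S)
    (X : Fin n → Fin p → S → ℝ) (f : ℝ → ℝ → ℝ) (lam : ℝ) (hlam : 0 < lam)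
    (T : Finset S) (hT : T = Finset.univ.biUnion Ti)
    (F : (Fin R → EuclideanSpace ℝ (Fin n) × EuclideanSpace ℝ (Fin p) × H) → ℝ)
    (hF : ∀ v, F v = ∑ i : Fin n, ∑ j : Fin p, ∑ t ∈ Ti i,
        f (∑ r : Fin R, (v r).1 i * (v r).2.1 j * ⟪(v r).2.2, φ t⟫) (X i j t))
    (Φ : Set (Fin R → EuclideanSpace ℝ (Fin n) × EuclideanSpace ℝ (Fin p) × H))
    (hΦ : Φ = {v | ∀ r, ‖(v r).1‖ * ‖(v r).2.1‖ * ‖(v r).2.2‖ ≤ lam})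
    (V : Submodule ℝ H) (hV : V = Submodule.span ℝ (φ '' (T : Set S)))
    -- P is the orthogonal projection of H onto V
    (P : H → H) (hP : ∀ w : H, P w ∈ V ∧ w - P w ∈ Vᗮ)
    (vhat : Fin R → EuclideanSpace ℝ (Fin n) × EuclideanSpace ℝ (Fin p) × H)
    (hmem : vhat ∈ Φ) (hmin : ∀ v ∈ Φ, F vhat ≤ F v) :
    (fun r => ((vhat r).1, (vhat r).2.1, P (vhat r).2.2)) ∈ Φ ∧
    (∀ v ∈ Φ, F (fun r => ((vhat r).1, (vhat r).2.1, P (vhat r).2.2)) ≤ F v) ∧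
    ∃ θ : Fin R → S → ℝ, ∀ r, P (vhat r).2.2 = ∑ t ∈ T, θ r t • φ t :=
  stmt_1_general φ n p R Ti X f lam T hT F hF Φ hΦ V hV P hP vhat hmem hmin
end

section
/- Let m ∈ ℕ, w, w̃ ∈ ℝ^m, s ∈ ℝ, z ∈ ℝ^m, and set x_k = w_k·s + z_k for k = 1, …, m. Suppose Σ_{k=1}^m w̃_k² ≥ C₁ for some C₁ > 0 and |w̃_k| ≤ M for all k. Then the weighted least-squares estimate ŝ = (Σ_{k=1}^m w̃_k·x_k) / (Σ_{k=1}^m w̃_k²), which is the global minimizer over s' ∈ ℝ of Σ_{k=1}^m (x_k − w̃_k·s')², satisfies |ŝ − s| ≤ (M / C₁) · Σ_{k=1}^m ( |s|·|w_k − w̃_k| + |z_k| ). -/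
/-!
Writing `D = ∑ w̃ₖ²`, the estimate satisfies the normal equation `ŝ D = ∑ w̃ₖ xₖ`, so
`∑ (xₖ - w̃ₖ t)² = ∑ (xₖ - w̃ₖ ŝ)² + (t - ŝ)² D` and `ŝ` is the minimizer. Substituting
`xₖ = wₖ s + zₖ` gives `(ŝ - s) D = ∑ w̃ₖ ((wₖ - w̃ₖ) s + zₖ)`; bounding `|w̃ₖ| ≤ M` and `D ≥ C₁`
yields the perturbation bound.
-/

open Finset

variable {ι : Type*} [Fintype ι]

noncomputable def lsqEstimate (a x : ι → ℝ) : ℝ :=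
  (∑ k, a k * x k) / ∑ k, a k ^ 2

theorem lsqEstimate_mul_sum_sq (a x : ι → ℝ) :
    lsqEstimate a x * ∑ k, a k ^ 2 = ∑ k, a k * x k := by
  by_cases hD : ∑ k, a k ^ 2 = 0
  · have ha : ∀ k, a k = 0 := fun k ↦
      pow_eq_zero_iff two_ne_zero |>.mp <|
        (sum_eq_zero_iff_of_nonneg fun k _ ↦ sq_nonneg (a k)).mp hD k (mem_univ k)
    simp [ha]
  · exact div_mul_cancel₀ _ hD

theorem sum_sq_sub_mul_eq_of_normal_eq (a x : ι → ℝ) {t₀ : ℝ}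
    (h : t₀ * ∑ k, a k ^ 2 = ∑ k, a k * x k) (t : ℝ) :
    ∑ k, (x k - a k * t) ^ 2 = ∑ k, (x k - a k * t₀) ^ 2 + (t - t₀) ^ 2 * ∑ k, a k ^ 2 := by
  have expand : ∀ u : ℝ, ∑ k, (x k - a k * u) ^ 2
      = ∑ k, x k ^ 2 - 2 * u * ∑ k, a k * x k + u ^ 2 * ∑ k, a k ^ 2 := fun u ↦ by
    simp only [mul_sum, ← sum_sub_distrib, ← sum_add_distrib]
    exact sum_congr rfl fun k _ ↦ by ring
  rw [expand, expand, ← h]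
  ring

theorem sum_sq_sub_mul_lsqEstimate_le (a x : ι → ℝ) (t : ℝ) :
    ∑ k, (x k - a k * lsqEstimate a x) ^ 2 ≤ ∑ k, (x k - a k * t) ^ 2 := by
  rw [sum_sq_sub_mul_eq_of_normal_eq a x (lsqEstimate_mul_sum_sq a x) t]
  exact le_add_of_nonneg_right (by positivity)

theorem lsqEstimate_sub_eq (a w z : ι → ℝ) (s : ℝ) (hD : ∑ k, a k ^ 2 ≠ 0) :
    lsqEstimate a (fun k ↦ w k * s + z k) - s
      = (∑ k, a k * ((w k - a k) * s + z k)) / ∑ k, a k ^ 2 := by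
  rw [lsqEstimate, div_sub' hD, sum_mul, ← sum_sub_distrib]
  congr 1
  exact sum_congr rfl fun k _ ↦ by ring

theorem abs_sum_mul_le_of_abs_le {a y b : ι → ℝ} {M : ℝ} (hM : ∀ k, |a k| ≤ M)
    (hy : ∀ k, |y k| ≤ b k) :
    |∑ k, a k * y k| ≤ M * ∑ k, b k := by
  rw [mul_sum]
  refine (abs_sum_le_sum_abs _ _).trans (sum_le_sum fun k _ ↦ ?_)
  rw [abs_mul]
  calc |a k| * |y k| ≤ |a k| * b k := mul_le_mul_of_nonneg_left (hy k) (abs_nonneg _)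
    _ ≤ M * b k := mul_le_mul_of_nonneg_right (hM k) ((abs_nonneg _).trans (hy k))

theorem abs_lsqEstimate_sub_le (a w z : ι → ℝ) (s : ℝ) {C M : ℝ} (hC : 0 < C)
    (hsum : C ≤ ∑ k, a k ^ 2) (hM : ∀ k, |a k| ≤ M) :
    |lsqEstimate a (fun k ↦ w k * s + z k) - s|
      ≤ M / C * ∑ k, (|s| * |w k - a k| + |z k|) := by
  have hD : 0 < ∑ k, a k ^ 2 := hC.trans_le hsum
  have hnum : |∑ k, a k * ((w k - a k) * s + z k)| ≤ M * ∑ k, (|s| * |w k - a k| + |z k|) :=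
    abs_sum_mul_le_of_abs_le hM fun k ↦
      (abs_add_le _ _).trans_eq (by rw [abs_mul, mul_comm])
  rw [lsqEstimate_sub_eq a w z s hD.ne', abs_div, abs_of_pos hD, div_mul_eq_mul_div]
  calc _ ≤ (M * ∑ k, (|s| * |w k - a k| + |z k|)) / ∑ k, a k ^ 2 :=
        div_le_div_of_nonneg_right hnum hD.le
    _ ≤ _ := div_le_div_of_nonneg_left ((abs_nonneg _).trans hnum) hC hsum

/-- One-coordinate perturbation bound for a one-dimensional weighted
least-squares problem with perturbed weights `wt` and additive noise `z`. -/
theorem stmt_11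
    (m : ℕ) (w wt : Fin m → ℝ) (s : ℝ) (z : Fin m → ℝ)
    (x : Fin m → ℝ) (hx : ∀ k, x k = w k * s + z k)
    (C₁ M : ℝ) (hC₁ : 0 < C₁)
    (hsum : C₁ ≤ ∑ k, wt k ^ 2) (hM : ∀ k, |wt k| ≤ M)
    (shat : ℝ) (hshat : shat = (∑ k, wt k * x k) / (∑ k, wt k ^ 2)) :
    (∀ s' : ℝ, ∑ k, (x k - wt k * shat) ^ 2 ≤ ∑ k, (x k - wt k * s') ^ 2) ∧
    |shat - s| ≤ (M / C₁) * ∑ k, (|s| * |w k - wt k| + |z k|) := by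
  change shat = lsqEstimate wt x at hshat
  subst hshat
  obtain rfl : x = fun k ↦ w k * s + z k := funext hx
  exact ⟨sum_sq_sub_mul_lsqEstimate_le wt _, abs_lsqEstimate_sub_le wt w z s hC₁ hsum hM⟩
end
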